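/- arXiv:1909.05893 — 2 statements merged into one kernel-verified Lean document; each statement's English description precedes it below -/
import Mathlib

section
/- Let F, E, B be topological spaces, let p : E → B be a continuous map carrying the structure of a fiber bundle with fiber F (i.e., every point of B has an open neighborhood U together with a homeomorphism h : p⁻¹(U) → U × F whose first coordinate is p). Then p has the homotopy lifting property with respect to every cube: for every natural number k, every continuous map f̂ : [0,1]^k → E, and every continuous map H : [0,1]^k × [0,1] → B with H(x, 0) = p(f̂(x)) for all x, there exists a continuous map Ĥ : [0,1]^k × [0,1] → E with Ĥ(x, 0) = f̂(x) and p(Ĥ(x, t)) = H(x, t) for all x and t. -/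
/-! Subdivide the cube `I^(k+1)` (time being one coordinate) into a grid so fine that each cell
lies over a trivializing open set, and build the lift cell by cell in lexicographic order. When a
cell is reached, the region already lifted meets it in a union of its lower faces, onto which the
cell retracts by sliding down a diagonal; over a trivialized set the lift then extends across the
cell by keeping the base point and taking the fiber coordinate of the lift at the retracted
point. -/

open Set Function unitInterval

namespace FiberBundleLifting

variable {n : ℕ}

def box (l : Fin n → ℝ) (δ : ℝ) : Set (Fin n → I) :=
  univ.pi fun i => ((↑) : I → ℝ) ⁻¹' Icc (l i) (l i + δ)

theorem mem_box {l : Fin n → ℝ} {δ : ℝ} {z : Fin n → I} :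
    z ∈ box l δ ↔ ∀ i, l i ≤ z i ∧ (z i : ℝ) ≤ l i + δ := by
  simp [box]

theorem isClosed_box (l : Fin n → ℝ) (δ : ℝ) : IsClosed (box l δ) :=
  isClosed_set_pi fun _ _ => isClosed_Icc.preimage continuous_subtype_val

theorem dist_le_of_mem_box {l : Fin n → ℝ} {δ : ℝ} (hδ : 0 ≤ δ) {x y : Fin n → I}
    (hx : x ∈ box l δ) (hy : y ∈ box l δ) : dist x y ≤ δ := by
  refine (dist_pi_le_iff hδ).2 fun i => ?_
  rw [Subtype.dist_eq, Real.dist_eq, abs_le]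
  have := mem_box.1 hx i
  have := mem_box.1 hy i
  constructor <;> linarith

def lowerFaces (l : Fin n → ℝ) (δ : ℝ) (S : Finset (Fin n)) : Set (Fin n → I) :=
  box l δ ∩ {z | ∃ i ∈ S, (z i : ℝ) = l i}

theorem exists_retraction_box_lowerFaces {l : Fin n → ℝ} (hl : ∀ i, 0 ≤ l i) (δ : ℝ)
    {S : Finset (Fin n)} (hS : S.Nonempty) :
    ∃ r : (Fin n → I) → Fin n → I, Continuous r ∧
      MapsTo r (box l δ) (lowerFaces l δ S) ∧ EqOn r id (lowerFaces l δ S) := by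
  set μ : (Fin n → I) → ℝ := fun z => S.inf' hS fun i => (z i : ℝ) - l i
  have hμ : Continuous μ := Continuous.finset_inf'_apply hS fun i _ => by fun_prop
  have hμ_le : ∀ z, ∀ i ∈ S, μ z ≤ z i - l i := fun z i hi => Finset.inf'_le _ hi
  have hμ_nonneg : ∀ z ∈ box l δ, 0 ≤ μ z := fun z hz =>
    Finset.le_inf' _ _ fun i _ => sub_nonneg.2 (mem_box.1 hz i).1
  set r : (Fin n → I) → Fin n → I :=
    fun z i => if i ∈ S then projIcc 0 1 zero_le_one (z i - μ z) else z i
  have hr : ∀ z ∈ box l δ, ∀ i ∈ S, (r z i : ℝ) = z i - μ z := fun z hz i hi => by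
    rw [show r z i = _ from if_pos hi, projIcc_of_mem]
    exact ⟨by linarith [hμ_le z i hi, hl i], by linarith [(z i).2.2, hμ_nonneg z hz]⟩
  refine ⟨r, continuous_pi fun i => ?_, fun z hz => ⟨mem_box.2 fun i => ?_, ?_⟩, fun z hz => ?_⟩
  · by_cases hi : i ∈ S
    · simp only [r, if_pos hi]
      fun_prop
    · simp only [r, if_neg hi]
      fun_prop
  · by_cases hi : i ∈ S
    · rw [hr z hz i hi]
      have := mem_box.1 hz i
      constructor <;> linarith [hμ_le z i hi, hμ_nonneg z hz]
    · rw [show r z i = z i from if_neg hi]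
      exact mem_box.1 hz i
  · obtain ⟨i, hi, hμi⟩ : ∃ i ∈ S, μ z = z i - l i := Finset.exists_mem_eq_inf' hS _
    exact ⟨i, hi, by rw [hr z hz i hi, hμi]; ring⟩
  · obtain ⟨hzbox, i, hi, hzi⟩ := hz
    have hμ0 : μ z = 0 := le_antisymm (by linarith [hμ_le z i hi]) (hμ_nonneg z hzbox)
    funext j
    by_cases hj : j ∈ S
    · exact Subtype.ext (by rw [hr z hzbox j hj, hμ0, sub_zero]; rfl)
    · exact if_neg hj

theorem exists_lift_union_of_retraction {X E B F : Type*} [TopologicalSpace X]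
    [TopologicalSpace E] [TopologicalSpace B] [TopologicalSpace F]
    {p : E → B} {U : Set B} (e : p ⁻¹' U ≃ₜ U × F) (he : ∀ x, ((e x).1 : B) = p x)
    {H : X → B} (hH : Continuous H) {K Q : Set X} (hK : IsClosed K) (hQ : IsClosed Q)
    (hHQ : MapsTo H Q U) {r : X → X} (hr : ContinuousOn r Q) (hrQ : MapsTo r Q (K ∩ Q))
    (hrK : EqOn r id (K ∩ Q)) {g : X → E} (hg : ContinuousOn g K)
    (hgH : ∀ z ∈ K, p (g z) = H z) :
    ∃ g' : X → E, ContinuousOn g' (K ∪ Q) ∧ (∀ z ∈ K ∪ Q, p (g' z) = H z) ∧ EqOn g' g K := by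
  have hgU : ∀ z ∈ K ∩ Q, g z ∈ p ⁻¹' U := fun z hz => by
    rw [mem_preimage, hgH z hz.1]
    exact hHQ hz.2
  let φ : Q → E := fun z =>
    e.symm (⟨H z, hHQ z.2⟩, (e ⟨g (r z), hgU _ (hrQ z.2)⟩).2)
  have hφ : Continuous φ := by
    have hgr : Continuous fun z : Q => g (r z) :=
      continuousOn_iff_continuous_domRestrict.1 (hg.comp hr fun z hz => (hrQ hz).1)
    exact continuous_subtype_val.comp (e.symm.continuous.comp
      (((hH.comp continuous_subtype_val).subtype_mk _).prodMk
        (continuous_snd.comp (e.continuous.comp (hgr.subtype_mk _)))))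
  have hpφ : ∀ z, p (φ z) = H z := fun z => by
    rw [← he, e.apply_symm_apply]
  have hφg : ∀ z : Q, (z : X) ∈ K → φ z = g z := fun z hzK => by
    have hz : (z : X) ∈ K ∩ Q := ⟨hzK, z.2⟩
    have hfix : (⟨g (r z), hgU _ (hrQ z.2)⟩ : p ⁻¹' U) = ⟨g z, hgU z hz⟩ := by
      rw [Subtype.mk.injEq, hrK hz, id]
    have hbase : (⟨H z, hHQ z.2⟩ : U) = (e ⟨g z, hgU z hz⟩).1 :=
      Subtype.ext (by rw [he]; exact (hgH z hzK).symm)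
    simp only [φ, hfix, hbase, Prod.mk.eta, Homeomorph.symm_apply_apply]
  classical
  let g' : X → E := fun z => if hz : z ∈ Q then φ ⟨z, hz⟩ else g z
  have hg'Q : ∀ z (hz : z ∈ Q), g' z = φ ⟨z, hz⟩ := fun z hz => dif_pos hz
  have hg'K : EqOn g' g K := fun z hzK => by
    by_cases hzQ : z ∈ Q
    · exact (hg'Q z hzQ).trans (hφg ⟨z, hzQ⟩ hzK)
    · exact dif_neg hzQ
  refine ⟨g', ContinuousOn.union_of_isClosed (hg.congr hg'K) ?_ hK hQ, ?_, hg'K⟩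
  · rw [continuousOn_iff_continuous_domRestrict]
    convert hφ using 1
    exact funext fun z => hg'Q z z.2
  · rintro z (hzK | hzQ)
    · rw [hg'K hzK, hgH z hzK]
    · rw [hg'Q z hzQ, hpφ]

section Grid

variable {N : ℕ}

noncomputable def gridCorner (N : ℕ) (a : Fin n → Fin N) : Fin n → ℝ := fun i => (a i : ℕ) / N

def gridCell (N : ℕ) (a : Fin n → Fin N) : Set (Fin n → I) := box (gridCorner N a) (1 / N)

theorem gridCorner_nonneg (a : Fin n → Fin N) (i : Fin n) : 0 ≤ gridCorner N a i := by
  unfold gridCorner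
  positivity

theorem gridCorner_add_le_one (a : Fin n → Fin N) (i : Fin n) :
    gridCorner N a i + 1 / N ≤ 1 := by
  have hN : (0 : ℝ) < N := Nat.cast_pos.2 (a i).pos
  rw [gridCorner, ← add_div, div_le_one hN]
  exact_mod_cast (a i).isLt

theorem gridCell_nonempty (a : Fin n → Fin N) : (gridCell N a).Nonempty := by
  have hN : (0 : ℝ) ≤ 1 / N := by positivity
  refine ⟨fun i => ⟨gridCorner N a i, gridCorner_nonneg a i, ?_⟩, mem_box.2 fun i => ?_⟩
  · linarith [gridCorner_add_le_one a i]
  · exact ⟨le_rfl, le_add_of_nonneg_right hN⟩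

theorem exists_mem_gridCell (hN : 0 < N) (z : Fin n → I) : ∃ a, z ∈ gridCell N a := by
  have hN' : (0 : ℝ) < N := Nat.cast_pos.2 hN
  let m : Fin n → ℕ := fun i => min ⌊(z i : ℝ) * N⌋₊ (N - 1)
  have hm_le : ∀ i, (m i : ℝ) ≤ z i * N := fun i =>
    (Nat.cast_le.2 (min_le_left _ _)).trans (Nat.floor_le (mul_nonneg (z i).2.1 N.cast_nonneg))
  have hle_m : ∀ i, (z i : ℝ) * N ≤ m i + 1 := fun i => by
    rcases le_total ⌊(z i : ℝ) * N⌋₊ (N - 1) with h | h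
    · rw [show m i = _ from min_eq_left h]
      exact (Nat.lt_floor_add_one _).le
    · rw [show m i = _ from min_eq_right h, Nat.cast_sub hN, Nat.cast_one, sub_add_cancel]
      nlinarith [(z i).2.2]
  refine ⟨fun i => ⟨m i, (min_le_right _ _).trans_lt (Nat.sub_lt hN one_pos)⟩,
    mem_box.2 fun i => ⟨?_, ?_⟩⟩
  · rw [gridCorner, div_le_iff₀ hN']
    exact hm_le i
  · rw [gridCorner, ← add_div, le_div_iff₀ hN']
    exact hle_m i

theorem coe_eq_gridCorner_of_lt {a b : Fin n → Fin N} {i : Fin n} (hba : b i < a i)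
    {z : Fin n → I} (hzb : z ∈ gridCell N b) (hza : z ∈ gridCell N a) :
    (z i : ℝ) = gridCorner N a i := by
  have hN : (0 : ℝ) < N := Nat.cast_pos.2 (a i).pos
  have hstep : gridCorner N b i + 1 / N ≤ gridCorner N a i := by
    rw [gridCorner, gridCorner, ← add_div, div_le_div_iff_of_pos_right hN]
    exact_mod_cast hba
  linarith [(mem_box.1 hzb i).2, (mem_box.1 hza i).1]

theorem mem_gridCell_update {a : Fin n → Fin N} {i : Fin n} {c : Fin N}
    (hc : (c : ℕ) + 1 = a i) {z : Fin n → I} (hz : z ∈ gridCell N a)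
    (hzi : (z i : ℝ) = gridCorner N a i) : z ∈ gridCell N (update a i c) := by
  refine mem_box.2 fun j => ?_
  rcases eq_or_ne j i with rfl | hj
  · have hcorner : gridCorner N (update a j c) j + 1 / N = gridCorner N a j := by
      simp only [gridCorner, update_self, ← hc]
      push_cast
      ring
    have : (0 : ℝ) ≤ 1 / N := by positivity
    constructor <;> linarith [(mem_box.1 hz j).1]
  · simpa only [gridCorner, update_of_ne hj] using mem_box.1 hz j

theorem exists_gridCell_subset {ι : Type*} {c : ι → Set (Fin n → I)} (hc : ∀ i, IsOpen (c i))
    (hcover : ⋃ i, c i = univ) : ∃ N, 0 < N ∧ ∀ a : Fin n → Fin N, ∃ i, gridCell N a ⊆ c i := by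
  obtain ⟨δ, hδ, hball⟩ := lebesgue_number_lemma_of_metric isCompact_univ hc hcover.ge
  obtain ⟨m, hm⟩ := exists_nat_one_div_lt hδ
  refine ⟨m + 1, m.succ_pos, fun a => ?_⟩
  obtain ⟨x, hx⟩ := gridCell_nonempty a
  obtain ⟨i, hi⟩ := hball x (mem_univ x)
  refine ⟨i, fun y hy => hi (Metric.mem_ball.2 ?_)⟩
  have hdist := dist_le_of_mem_box (by positivity) hy hx
  push_cast at hdist
  exact hdist.trans_lt hm

theorem inter_gridCell_subset_lowerFaces (i₀ : Fin n) {a : Fin n → Fin N}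
    {s : Finset (Lex (Fin n → Fin N))} (hs : ∀ b ∈ s, b < toLex a) :
    ({z | z i₀ = 0} ∪ ⋃ b ∈ s, gridCell N (ofLex b)) ∩ gridCell N a ⊆
      lowerFaces (gridCorner N a) (1 / N) (insert i₀ ({i | (a i : ℕ) ≠ 0} : Finset _)) := by
  rintro z ⟨hz₀ | hzs, hza⟩
  · refine ⟨hza, i₀, Finset.mem_insert_self _ _, le_antisymm ?_ (mem_box.1 hza i₀).1⟩
    rw [show z i₀ = 0 from hz₀]
    exact gridCorner_nonneg a i₀
  · obtain ⟨b, hb, hzb⟩ := mem_iUnion₂.1 hzs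
    obtain ⟨i, -, hi⟩ := hs b hb
    have hai : (a i : ℕ) ≠ 0 := by
      have : (b i : ℕ) < a i := hi
      omega
    exact ⟨hza, i, Finset.mem_insert_of_mem (by simpa using hai),
      coe_eq_gridCorner_of_lt hi hzb hza⟩

theorem lowerFaces_subset_union (i₀ : Fin n) {a : Fin n → Fin N}
    {s : Finset (Lex (Fin n → Fin N))} (hs : ∀ b < toLex a, b ∈ s) :
    lowerFaces (gridCorner N a) (1 / N) (insert i₀ ({i | (a i : ℕ) ≠ 0} : Finset _)) ⊆
      {z | z i₀ = 0} ∪ ⋃ b ∈ s, gridCell N (ofLex b) := by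
  rintro z ⟨hza, i, hi, hzi⟩
  by_cases hai : (a i : ℕ) = 0
  · obtain rfl : i = i₀ := by simpa [hai] using hi
    exact Or.inl (Subtype.ext (by simp [hzi, gridCorner, hai]))
  · let c : Fin N := ⟨a i - 1, by omega⟩
    have hc : (c : ℕ) + 1 = a i := Nat.sub_add_cancel (Nat.pos_of_ne_zero hai)
    refine Or.inr (mem_iUnion₂.2 ⟨toLex (update a i c), hs _ ?_, mem_gridCell_update hc hza hzi⟩)
    exact Pi.toLex_update_lt_self_iff.2 (by simp only [Fin.lt_def]; omega)

end Grid

theorem coe_eq_Iio_of_isLowerSet_insert {α : Type*} [Preorder α] [DecidableEq α] {a : α}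
    {s : Finset α} (hlt : ∀ b ∈ s, b < a) (hlow : IsLowerSet (↑(insert a s) : Set α)) :
    (s : Set α) = Iio a := by
  refine Set.ext fun b => ⟨hlt b, fun hb => ?_⟩
  rcases Finset.mem_insert.1 (hlow hb.le (Finset.mem_insert_self a s)) with rfl | h
  · exact absurd hb (lt_irrefl b)
  · exact h

theorem exists_lift_of_lift_on_face {E B F : Type*} [TopologicalSpace E] [TopologicalSpace B]
    [TopologicalSpace F] (i₀ : Fin n) {p : E → B}
    (htriv : ∀ b : B, ∃ U : Set B, IsOpen U ∧ b ∈ U ∧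
      ∃ h : (p ⁻¹' U) ≃ₜ (U × F), ∀ x : p ⁻¹' U, ((h x).1 : B) = p x)
    {H : (Fin n → I) → B} (hH : Continuous H) {g : (Fin n → I) → E}
    (hg : ContinuousOn g {z | z i₀ = 0}) (hgH : ∀ z, z i₀ = 0 → p (g z) = H z) :
    ∃ G : (Fin n → I) → E, Continuous G ∧ (∀ z, p (G z) = H z) ∧ ∀ z, z i₀ = 0 → G z = g z := by
  classical
  choose U hU hbU e he using htriv
  obtain ⟨N, hN, hcell⟩ := exists_gridCell_subset (c := fun b => H ⁻¹' U b)
    (fun b => (hU b).preimage hH) (iUnion_eq_univ_iff.2 fun z => ⟨H z, hbU _⟩)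
  choose idx hidx using hcell
  let K : Finset (Lex (Fin n → Fin N)) → Set (Fin n → I) :=
    fun s => {z | z i₀ = 0} ∪ ⋃ b ∈ s, gridCell N (ofLex b)
  have hK : ∀ s, IsClosed (K s) := fun s =>
    (isClosed_eq (continuous_apply i₀) continuous_const).union
      (isClosed_biUnion_finset fun _ _ => isClosed_box _ _)
  suffices ∀ s : Finset (Lex (Fin n → Fin N)), IsLowerSet (s : Set (Lex (Fin n → Fin N))) →
      ∃ G : (Fin n → I) → E,
        ContinuousOn G (K s) ∧ (∀ z ∈ K s, p (G z) = H z) ∧ EqOn G g {z | z i₀ = 0} by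
    obtain ⟨G, hGc, hGH, hGg⟩ := this Finset.univ (by simp [isLowerSet_univ])
    have hKuniv : K Finset.univ = univ := eq_univ_of_forall fun z =>
      let ⟨a, ha⟩ := exists_mem_gridCell hN z
      Or.inr (mem_iUnion₂.2 ⟨toLex a, Finset.mem_univ _, ha⟩)
    rw [hKuniv] at hGc hGH
    exact ⟨G, continuousOn_univ.1 hGc, fun z => hGH z trivial, fun z hz => hGg hz⟩
  intro s
  induction s using Finset.induction_on_max with
  | empty => exact fun _ => ⟨g, by simpa [K] using hg, by simpa [K] using hgH, fun _ _ => rfl⟩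
  | insert a s hlt ih =>
    intro hlow
    have hs := coe_eq_Iio_of_isLowerSet_insert hlt hlow
    have hbelow : ∀ b < a, b ∈ s := fun b hb => by rwa [← Finset.mem_coe, hs]
    obtain ⟨G, hGc, hGH, hGg⟩ := ih (hs ▸ isLowerSet_Iio a)
    obtain ⟨r, hr, hrQ, hrC⟩ := exists_retraction_box_lowerFaces (gridCorner_nonneg (ofLex a))
      (1 / N) (Finset.insert_nonempty i₀ _)
    have hinter := inter_gridCell_subset_lowerFaces i₀ hlt
    have hfaces := lowerFaces_subset_union (N := N) i₀ hbelow
    obtain ⟨G', hG'c, hG'H, hG'G⟩ := exists_lift_union_of_retraction (e (idx a)) (he _) hH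
      (hK s) (isClosed_box _ _) (fun z hz => hidx a hz) hr.continuousOn
      (fun z hz => ⟨hfaces (hrQ hz), (hrQ hz).1⟩) (fun z hz => hrC (hinter hz)) hGc hGH
    have hKinsert : K (insert a s) = K s ∪ gridCell N (ofLex a) := by
      simp only [K, Finset.set_biUnion_insert]
      ac_rfl
    rw [hKinsert]
    exact ⟨G', hG'c, hG'H, fun z hz => (hG'G (Or.inl hz)).trans (hGg hz)⟩

end FiberBundleLifting

open FiberBundleLifting in
theorem fiber_bundle_homotopy_lifting_property_cubes_general
    {E B F : Type*} [TopologicalSpace E] [TopologicalSpace B] [TopologicalSpace F]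
    (p : E → B)
    (htriv : ∀ b : B, ∃ U : Set B, IsOpen U ∧ b ∈ U ∧
      ∃ h : (p ⁻¹' U) ≃ₜ (U × F), ∀ x : p ⁻¹' U, ((h x).1 : B) = p x)
    (k : ℕ)
    (f : (Fin k → unitInterval) → E) (hf : Continuous f)
    (H : (Fin k → unitInterval) × unitInterval → B) (hH : Continuous H)
    (hH0 : ∀ x : Fin k → unitInterval, H (x, 0) = p (f x)) :
    ∃ Hlift : (Fin k → unitInterval) × unitInterval → E,
      Continuous Hlift ∧
      (∀ x : Fin k → unitInterval, Hlift (x, 0) = f x) ∧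
      (∀ (x : Fin k → unitInterval) (t : unitInterval), p (Hlift (x, t)) = H (x, t)) := by
  obtain ⟨G, hG, hGH, hGf⟩ := exists_lift_of_lift_on_face 0 htriv
    (H := fun z => H (Fin.tail z, z 0)) (by fun_prop) (g := fun z => f (Fin.tail z))
    (by fun_prop) fun z hz => by simp [hz, hH0]
  refine ⟨fun y => G (Fin.cons y.2 y.1), by fun_prop, fun x => ?_, fun x t => ?_⟩
  · simpa using hGf (Fin.cons 0 x) rfl
  · simpa using hGH (Fin.cons t x)

/-- **Fiber bundles have the homotopy lifting property with respect to cubes.**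
If `p : E → B` is continuous and every point of `B` has an open neighborhood `U` admitting a
homeomorphism `p⁻¹(U) ≃ₜ U × F` whose first coordinate is `p` (a local trivialization), then for
every `k`, every continuous `f : [0,1]^k → E`, and every continuous homotopy
`H : [0,1]^k × [0,1] → B` with `H(x,0) = p (f x)`, there is a continuous lift
`Ĥ : [0,1]^k × [0,1] → E` with `Ĥ(x,0) = f x` and `p ∘ Ĥ = H`. -/
theorem fiber_bundle_homotopy_lifting_property_cubes
    {E B F : Type*} [TopologicalSpace E] [TopologicalSpace B] [TopologicalSpace F]
    (p : E → B) (hp : Continuous p)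
    (htriv : ∀ b : B, ∃ U : Set B, IsOpen U ∧ b ∈ U ∧
      ∃ h : (p ⁻¹' U) ≃ₜ (U × F), ∀ x : p ⁻¹' U, ((h x).1 : B) = p x)
    (k : ℕ)
    (f : (Fin k → unitInterval) → E) (hf : Continuous f)
    (H : (Fin k → unitInterval) × unitInterval → B) (hH : Continuous H)
    (hH0 : ∀ x : Fin k → unitInterval, H (x, 0) = p (f x)) :
    ∃ Hlift : (Fin k → unitInterval) × unitInterval → E,
      Continuous Hlift ∧
      (∀ x : Fin k → unitInterval, Hlift (x, 0) = f x) ∧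
      (∀ (x : Fin k → unitInterval) (t : unitInterval), p (Hlift (x, t)) = H (x, t)) :=
  fiber_bundle_homotopy_lifting_property_cubes_general p htriv k f hf H hH hH0
end

section
/- Let p : E → B be a continuous map of topological spaces carrying the structure of a fiber bundle with fiber F, let b₀ ∈ B and x₀ ∈ p⁻¹(b₀). If the fiber p⁻¹(b₀) (with the subspace topology) is path-connected, then the induced homomorphism of fundamental groups p_* : π₁(E, x₀) → π₁(B, b₀) is surjective. -/
/-!
Over a trivializing open set a path lifts exactly, by keeping the fiber coordinate constant.
Subdividing a loop `γ` at `b₀` along a Lebesgue number of the cover by trivializing sets and lifting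
piece by piece gives a path in `E` from `x₀` to some `x'` over `b₀` whose image is homotopic to `γ`,
since the subpaths of `γ` concatenate back to `γ`. Closing it up by a path from `x'` to `x₀` inside
the fiber does not change the image class, as `p` is constant on that path.
-/

open CategoryTheory

/-- The homomorphism of fundamental groups induced by a continuous map `f`, with basepoint `x`
mapped to `f x`. -/
noncomputable def inducedFundamentalGroupHom {X Y : Type} [TopologicalSpace X]
    [TopologicalSpace Y] (f : C(X, Y)) (x : X) :
    FundamentalGroup X x →* FundamentalGroup Y (f x) :=
  CategoryTheory.Functor.mapEnd (FundamentalGroupoid.mk x)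
    (FundamentalGroupoid.fundamentalGroupoidFunctor.map (X := TopCat.of X) (Y := TopCat.of Y) (TopCat.ofHom f))

open Set
open scoped unitInterval

namespace ContinuousMap

variable {E B : Type*} [TopologicalSpace E] [TopologicalSpace B] (p : C(E, B))

def LiftsPathsIn (U : Set B) : Prop :=
  ∀ ⦃c c' : B⦄ (γ : Path c c'), range γ ⊆ U → ∀ x, p x = c →
    ∃ (x' : E) (Γ : Path x x'), ∀ s, p (Γ s) = γ s

variable {p} in
theorem LiftsPathsIn.mono {U V : Set B} (hU : p.LiftsPathsIn U) (hVU : V ⊆ U) :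
    p.LiftsPathsIn V :=
  fun _ _ γ hγ ↦ hU γ (hγ.trans hVU)

theorem liftsPathsIn_of_homeomorph {F : Type*} [TopologicalSpace F] {U : Set B}
    (h : p ⁻¹' U ≃ₜ U × F) (hh : ∀ x, ((h x).1 : B) = p x) : p.LiftsPathsIn U := by
  intro c c' γ hγ x hx
  have hxU : x ∈ p ⁻¹' U := by simpa [mem_preimage, hx] using hγ ⟨0, γ.source⟩
  let lift : I → E := fun s ↦ h.symm (⟨γ s, hγ ⟨s, rfl⟩⟩, (h ⟨x, hxU⟩).2)
  have hlift : ∀ s, p (lift s) = γ s := fun s ↦ by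
    simpa [lift] using (hh (h.symm (⟨γ s, hγ ⟨s, rfl⟩⟩, (h ⟨x, hxU⟩).2))).symm
  have hlift0 : lift 0 = x := by
    have : ((⟨γ 0, hγ ⟨0, rfl⟩⟩, (h ⟨x, hxU⟩).2) : U × F) = h ⟨x, hxU⟩ :=
      Prod.ext (Subtype.ext (by simp [hh, hx])) rfl
    simp only [lift, this, Homeomorph.symm_apply_apply]
  exact ⟨lift 1, ⟨⟨lift, by fun_prop⟩, hlift0, rfl⟩, hlift⟩

theorem exists_lift_homotopic_subpath {a b : B} (γ : Path a b) (t : ℕ → I)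
    (hpiece : ∀ k, p.LiftsPathsIn (range (γ.subpath (t k) (t (k + 1)))))
    (n : ℕ) (x : E) (hx : p x = γ (t 0)) :
    ∃ (x' : E) (hx' : p x' = γ (t n)) (Γ : Path x x'),
      (Γ.map p.continuous).Homotopic ((γ.subpath (t 0) (t n)).cast hx hx') := by
  induction n with
  | zero =>
    refine ⟨x, hx, Path.refl x, ?_⟩
    rw [show (Path.refl x).map p.continuous = (γ.subpath (t 0) (t 0)).cast hx hx by
      ext s; simp [hx]]
  | succ n ih =>
    obtain ⟨x₁, hx₁, Γ₁, hΓ₁⟩ := ih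
    obtain ⟨x₂, Γ₂, hΓ₂⟩ := hpiece n _ subset_rfl x₁ hx₁
    have hx₂ : p x₂ = γ (t (n + 1)) := by simpa using hΓ₂ 1
    have hmap₂ : Γ₂.map p.continuous = (γ.subpath (t n) (t (n + 1))).cast hx₁ hx₂ := by
      ext s; exact hΓ₂ s
    refine ⟨x₂, hx₂, Γ₁.trans Γ₂, ?_⟩
    rw [Path.map_trans, hmap₂]
    refine (hΓ₁.hcomp (.refl _)).trans ?_
    rw [← Path.cast_trans]
    exact .pathCast ⟨Path.Homotopy.subpathTransSubpath γ _ _ _⟩ _ _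

theorem exists_path_lift_homotopic (hloc : ∀ b, ∃ U, IsOpen U ∧ b ∈ U ∧ p.LiftsPathsIn U)
    {b : B} (x : E) (γ : Path (p x) b) :
    ∃ (x' : E) (hx' : p x' = b) (Γ : Path x x'),
      (Γ.map p.continuous).Homotopic (γ.cast rfl hx') := by
  choose U hUopen hmemU hU using hloc
  obtain ⟨t, ht0, htmono, ⟨n, htn⟩, htU⟩ := exists_monotone_Icc_subset_open_cover_unitInterval
    (c := fun b ↦ γ ⁻¹' U b) (fun b ↦ (hUopen b).preimage γ.continuous)
    (fun s _ ↦ mem_iUnion.2 ⟨γ s, hmemU _⟩)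
  have hpiece (k : ℕ) : p.LiftsPathsIn (range (γ.subpath (t k) (t (k + 1)))) := by
    obtain ⟨c, hc⟩ := htU k
    refine (hU c).mono ?_
    rw [Path.range_subpath_of_le _ _ _ (htmono k.le_succ)]
    exact image_subset_iff.2 hc
  obtain ⟨x', hx', Γ, hΓ⟩ := exists_lift_homotopic_subpath p γ t hpiece n x (by simp [ht0])
  refine ⟨x', by simpa [htn n le_rfl] using hx', Γ, ?_⟩
  convert hΓ using 1
  ext s
  simp [Path.subpath, ht0, htn n le_rfl]

theorem map_trans_homotopic_of_fiber_path {x x' : E} {γ : Path (p x) (p x)} (Γ : Path x x')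
    (hx' : p x' = p x) (hΓ : (Γ.map p.continuous).Homotopic (γ.cast rfl hx'))
    (δ : Path x' x) (hδ : ∀ s, p (δ s) = p x) :
    ((Γ.trans δ).map p.continuous).Homotopic γ := by
  have hmap : δ.map p.continuous = (Path.refl (p x)).cast hx' rfl := by
    ext s; exact hδ s
  rw [Path.map_trans, hmap]
  refine (hΓ.hcomp (.refl _)).trans ?_
  rw [← Path.cast_trans]
  exact ⟨Path.Homotopy.transRefl γ⟩

end ContinuousMap

theorem fiber_bundle_pi1_map_surjective_of_pathConnected_fiber_general
    {E B F : Type} [TopologicalSpace E] [TopologicalSpace B] [TopologicalSpace F]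
    (p : C(E, B))
    (htriv : ∀ b : B, ∃ U : Set B, IsOpen U ∧ b ∈ U ∧
      ∃ h : (p ⁻¹' U) ≃ₜ (U × F), ∀ x : p ⁻¹' U, ((h x).1 : B) = p x)
    (b₀ : B) (x₀ : p ⁻¹' {b₀})
    (hfiber : IsPathConnected (p ⁻¹' {b₀})) :
    Function.Surjective (inducedFundamentalGroupHom p (x₀ : E)) := by
  have hloc (b : B) : ∃ U, IsOpen U ∧ b ∈ U ∧ p.LiftsPathsIn U := by
    obtain ⟨U, hU, hbU, h, hh⟩ := htriv b
    exact ⟨U, hU, hbU, p.liftsPathsIn_of_homeomorph h hh⟩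
  intro g
  obtain ⟨γ, rfl⟩ := Path.Homotopic.Quotient.mk_surjective (FundamentalGroup.toPath g)
  obtain ⟨x', hx', Γ, hΓ⟩ := p.exists_path_lift_homotopic hloc x₀ γ
  have hpx₀ : p x₀ = b₀ := x₀.2
  obtain ⟨δ, hδ⟩ := hfiber.joinedIn x' (by simp [hx', hpx₀]) x₀ x₀.2
  refine ⟨FundamentalGroup.fromPath (.mk (Γ.trans δ)), Quotient.sound ?_⟩
  exact p.map_trans_homotopic_of_fiber_path Γ hx' hΓ δ fun s ↦ (hδ s).trans hpx₀.symm

/-- **Surjectivity of `p₊ : π₁(E) → π₁(B)` for a fiber bundle with path-connected fiber.**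
Let `p : E → B` be a continuous map that is a fiber bundle with fiber `F` (every point of `B` has
an open neighborhood over which `p` is trivial), let `b₀ ∈ B` and `x₀ ∈ p⁻¹(b₀)`.  If the fiber
`p⁻¹(b₀)` (with the subspace topology) is path-connected, then the induced homomorphism
`p₊ : π₁(E, x₀) → π₁(B, b₀)` is surjective. -/
theorem fiber_bundle_pi1_map_surjective_of_pathConnected_fiber
    {E B F : Type} [TopologicalSpace E] [TopologicalSpace B] [TopologicalSpace F]
    (p : C(E, B)) (hsurj : Function.Surjective p)
    (htriv : ∀ b : B, ∃ U : Set B, IsOpen U ∧ b ∈ U ∧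
      ∃ h : (p ⁻¹' U) ≃ₜ (U × F), ∀ x : p ⁻¹' U, ((h x).1 : B) = p x)
    (b₀ : B) (x₀ : p ⁻¹' {b₀})
    (hfiber : IsPathConnected (p ⁻¹' {b₀})) :
    Function.Surjective (inducedFundamentalGroupHom p (x₀ : E)) :=
  fiber_bundle_pi1_map_surjective_of_pathConnected_fiber_general p htriv b₀ x₀ hfiber
end
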